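/- arXiv:2308.04407 — 3 statements merged into one kernel-verified Lean document; each statement's English description precedes it below -/
import Mathlib

section
/- For every finite graph G with n vertices and minimum degree δ, there exists a dominating set of size at most n(1 + ln(1+δ))/(1+δ). -/
/-!
Greedy domination. Put `c = n / (1 + δ)`. Every closed neighbourhood has at least `1 + δ`
vertices, so double counting gives, for any set `U` of vertices still to be dominated, a vertex
whose closed neighbourhood contains at least `|U| / c` of them. Taking that vertex and recursing
on the rest dominates `U` with at most `φ(|U|)` vertices, where `φ = greedyBound c` is `x` for
`x ≤ c` (take `U` itself) and `c (1 + log (x / c))` beyond. It is concave with slope `c / u` at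
`u ≥ c`, so removing `|U| / c` vertices lowers it by at least `1`, which pays for the chosen
vertex. For `U` the whole vertex set, `φ(n) = n (1 + log (1 + δ)) / (1 + δ)`.
-/

open Finset Real

noncomputable def greedyBound (c x : ℝ) : ℝ :=
  if x ≤ c then x else c * (1 + log (x / c))

section greedyBound

variable {c u x : ℝ}

lemma greedyBound_of_le (h : c ≤ x) : greedyBound c x = c * (1 + log (x / c)) := by
  rcases h.eq_or_lt with rfl | h
  · simp [greedyBound]
  · simp [greedyBound, h.not_ge]

lemma greedyBound_le_tangent (hc : 0 < c) (hu : c ≤ u) (x : ℝ) :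
    greedyBound c x ≤ greedyBound c u + c / u * (x - u) := by
  have hu0 : 0 < u := hc.trans_le hu
  have hcu : c / u * u = c := div_mul_cancel₀ c hu0.ne'
  rw [greedyBound_of_le hu]
  by_cases hx : x ≤ c
  · have hlog : 1 - c / u ≤ log (u / c) := by
      simpa using one_sub_inv_le_log_of_pos (div_pos hu0 hc)
    have hcu_le : c / u ≤ 1 := (div_le_one hu0).2 hu
    rw [greedyBound, if_pos hx]
    nlinarith [mul_le_mul_of_nonneg_right hx (sub_nonneg.2 hcu_le),
      mul_le_mul_of_nonneg_left hlog hc.le]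
  · have hx0 : 0 < x := hc.trans (not_le.1 hx)
    have hsplit : log (x / c) = log (x / u) + log (u / c) := by
      rw [← log_mul (by positivity) (by positivity), div_mul_div_cancel₀ hu0.ne']
    have hlog : log (x / u) ≤ x / u - 1 := log_le_sub_one_of_pos (by positivity)
    have hxu : c * (x / u) = c / u * x := by ring
    rw [greedyBound, if_neg hx, hsplit]
    nlinarith [mul_le_mul_of_nonneg_left hlog hc.le]

lemma greedyBound_add_one_le (hc : 0 < c) (hu : c ≤ u) (hx : x ≤ u - u / c) :
    greedyBound c x + 1 ≤ greedyBound c u := by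
  have hcu : c / u * (u / c) = 1 := by
    field_simp [hc.ne', (hc.trans_le hu).ne']
  nlinarith [greedyBound_le_tangent hc hu x, div_pos hc (hc.trans_le hu)]

end greedyBound

namespace SimpleGraph

section Dominates

variable {V : Type*} (G : SimpleGraph V)

def Dominates (D U : Finset V) : Prop := ∀ v ∈ U, v ∈ D ∨ ∃ u ∈ D, G.Adj u v

lemma dominates_self (U : Finset V) : G.Dominates U U := fun _ hv ↦ Or.inl hv

end Dominates

variable {V : Type*} [Fintype V] [DecidableEq V] (G : SimpleGraph V) [DecidableRel G.Adj]

def closedNeighborFinset (v : V) : Finset V := insert v (G.neighborFinset v)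

variable {G} in
lemma mem_closedNeighborFinset {v w : V} : w ∈ G.closedNeighborFinset v ↔ w = v ∨ G.Adj v w := by
  simp [closedNeighborFinset]

variable {G} in
lemma mem_closedNeighborFinset_comm {v w : V} :
    w ∈ G.closedNeighborFinset v ↔ v ∈ G.closedNeighborFinset w := by
  simp only [mem_closedNeighborFinset, eq_comm, G.adj_comm]

lemma card_closedNeighborFinset (v : V) : #(G.closedNeighborFinset v) = G.degree v + 1 := by
  rw [closedNeighborFinset, card_insert_of_notMem (by simp), card_neighborFinset_eq_degree]

lemma sum_card_inter_closedNeighborFinset (U : Finset V) :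
    ∑ v, #(U ∩ G.closedNeighborFinset v) = ∑ u ∈ U, #(G.closedNeighborFinset u) := by
  simp_rw [← filter_mem_eq_inter, card_eq_sum_ones, sum_filter]
  rw [sum_comm]
  refine sum_congr rfl fun u _ ↦ ?_
  simp_rw [mem_closedNeighborFinset_comm (w := u), ← sum_filter, filter_mem_eq_inter, univ_inter]

lemma exists_card_mul_le_card_mul_card_inter_closedNeighborFinset {U : Finset V}
    (hU : U.Nonempty) :
    ∃ v, #U * (G.minDegree + 1) ≤ Fintype.card V * #(U ∩ G.closedNeighborFinset v) := by
  have hsum : #U * (G.minDegree + 1) ≤ ∑ v, #(U ∩ G.closedNeighborFinset v) := by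
    rw [sum_card_inter_closedNeighborFinset, ← smul_eq_mul, ← sum_const]
    gcongr with u
    rw [card_closedNeighborFinset]
    exact Nat.add_le_add_right (G.minDegree_le_degree u) 1
  obtain ⟨v, -, hv⟩ := exists_le_of_sum_le ⟨hU.choose, mem_univ _⟩
    (f := fun _ ↦ #U * (G.minDegree + 1))
    (g := fun v ↦ Fintype.card V * #(U ∩ G.closedNeighborFinset v))
    (by simpa [← mul_sum] using Nat.mul_le_mul_left (Fintype.card V) hsum)
  exact ⟨v, hv⟩

variable {G} in
lemma Dominates.insert_of_sdiff {D U : Finset V} {v : V}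
    (h : G.Dominates D (U \ G.closedNeighborFinset v)) : G.Dominates (insert v D) U := by
  intro w hw
  by_cases hwv : w ∈ G.closedNeighborFinset v
  · rcases mem_closedNeighborFinset.1 hwv with rfl | hadj
    · exact Or.inl (mem_insert_self w D)
    · exact Or.inr ⟨v, mem_insert_self v D, hadj⟩
  · rcases h w (mem_sdiff.2 ⟨hw, hwv⟩) with hwD | ⟨u, huD, hadj⟩
    · exact Or.inl (mem_insert_of_mem hwD)
    · exact Or.inr ⟨u, mem_insert_of_mem huD, hadj⟩

theorem exists_dominates_card_le_greedyBound (U : Finset V) :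
    ∃ D, G.Dominates D U ∧
      (#D : ℝ) ≤ greedyBound (Fintype.card V / (1 + G.minDegree)) #U := by
  set c : ℝ := Fintype.card V / (1 + G.minDegree)
  induction U using Finset.strongInduction with
  | H U ih =>
  by_cases hUc : (#U : ℝ) ≤ c
  · exact ⟨U, G.dominates_self U, by rw [greedyBound, if_pos hUc]⟩
  have hU : U.Nonempty := by
    rw [nonempty_iff_ne_empty]
    rintro rfl
    exact hUc (by simp only [card_empty, Nat.cast_zero, c]; positivity)
  have hU0 : (0 : ℝ) < #U := by exact_mod_cast hU.card_pos
  have hc : 0 < c := by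
    have : (0 : ℝ) < Fintype.card V := by exact_mod_cast hU.card_pos.trans_le (card_le_univ U)
    positivity
  obtain ⟨v, hv⟩ := G.exists_card_mul_le_card_mul_card_inter_closedNeighborFinset hU
  set N := G.closedNeighborFinset v
  have hstep : (#(U \ N) : ℝ) ≤ #U - #U / c := by
    have hcover : (#U : ℝ) / c ≤ #(U ∩ N) := by
      have hv' : (#U : ℝ) * (1 + G.minDegree) ≤ #(U ∩ N) * Fintype.card V := by
        have := (Nat.cast_le (α := ℝ)).2 hv
        push_cast at this
        linarith
      rwa [div_le_iff₀ hc, ← mul_div_assoc, le_div_iff₀ (by positivity)]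
    have hsplit : (#(U \ N) : ℝ) + #(U ∩ N) = #U := by
      exact_mod_cast card_sdiff_add_card_inter U N
    linarith
  have hsub : U \ N ⊂ U := sdiff_subset.ssubset_of_ne fun h ↦ by
    rw [h] at hstep
    linarith [div_pos hU0 hc]
  obtain ⟨D, hD, hDcard⟩ := ih _ hsub
  refine ⟨insert v D, hD.insert_of_sdiff, ?_⟩
  calc (#(insert v D) : ℝ) ≤ #D + 1 := by exact_mod_cast card_insert_le v D
    _ ≤ greedyBound c #(U \ N) + 1 := by gcongr
    _ ≤ greedyBound c #U := greedyBound_add_one_le hc (not_le.1 hUc).le hstep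

end SimpleGraph

/-- For every finite graph `G` with `n` vertices and minimum degree `δ`, there exists a
dominating set of size at most `n (1 + ln (1+δ)) / (1+δ)`. -/
theorem exists_dominating_set_le (V : Type*) [Fintype V] [DecidableEq V]
    (G : SimpleGraph V) [DecidableRel G.Adj] :
    ∃ D : Finset V, (∀ v : V, v ∈ D ∨ ∃ u ∈ D, G.Adj u v) ∧
      (D.card : ℝ) ≤ (Fintype.card V : ℝ) * (1 + Real.log (1 + (G.minDegree : ℝ))) /
        (1 + (G.minDegree : ℝ)) := by
  obtain ⟨D, hD, hcard⟩ := G.exists_dominates_card_le_greedyBound univ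
  refine ⟨D, fun v ↦ hD v (mem_univ v), hcard.trans_eq ?_⟩
  have hδ : (1 : ℝ) ≤ 1 + G.minDegree := le_add_of_nonneg_right (Nat.cast_nonneg _)
  rw [card_univ, greedyBound_of_le (div_le_self (Nat.cast_nonneg _) hδ)]
  rcases eq_or_ne (Fintype.card V : ℝ) 0 with hn | hn
  · simp [hn]
  · rw [div_div_cancel₀ hn]
    ring
end

section
/- For all real δ' ≥ 1, if w = (1+δ')/(1+ln(1+δ')), then (e·w)^{1/w} ≤ e. -/
/-! Since `e·w ≤ exp w` for every real `w`, raising both sides to the power `1/w > 0` gives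
`(e·w)^(1/w) ≤ exp 1`. For `δ' ≥ 1` both `1 + δ'` and `1 + ln(1 + δ')` are positive, so `w > 0`. -/

open Real

theorem Real.exp_one_mul_rpow_inv_le_exp_one {w : ℝ} (hw : 0 < w) :
    (exp 1 * w) ^ w⁻¹ ≤ exp 1 :=
  calc (exp 1 * w) ^ w⁻¹ ≤ exp w ^ w⁻¹ :=
        rpow_le_rpow (by positivity) exp_one_mul_le_exp (inv_nonneg.mpr hw.le)
    _ = exp 1 := by rw [← exp_mul, mul_inv_cancel₀ hw.ne']

/-- For all real `δ' ≥ 1`, if `w = (1+δ')/(1+ln(1+δ'))`, then `(e·w)^(1/w) ≤ e`. -/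
theorem ew_rpow_inv_w_le_e (δ' : ℝ) (hδ : 1 ≤ δ') :
    (Real.exp 1 * ((1 + δ') / (1 + Real.log (1 + δ')))) ^
        (((1 + δ') / (1 + Real.log (1 + δ')))⁻¹) ≤ Real.exp 1 := by
  have hlog : 0 ≤ log (1 + δ') := log_nonneg (by linarith)
  exact exp_one_mul_rpow_inv_le_exp_one (div_pos (by linarith) (by linarith))
end

section
/- Let G be a graph on n' vertices with minimum degree δ' ≥ 1. After selecting ⌈n' ln(δ'+1)/(δ'+1)⌉ vertices greedily (each covering the maximum number of undominated vertices), the number of undominated vertices is less than n'/(1+δ'); hence the greedy heuristic returns a dominating set of size at most n'(1 + ln(1+δ'))/(1+δ'). -/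
/-!
Each greedy step removes at least a `(δ'+1)/n'` fraction of the undominated set: every vertex
has a closed neighbourhood of size at least `δ'+1`, so by double counting some closed
neighbourhood meets at least `(δ'+1)/n'` of the undominated vertices. After
`T = ⌈n' ln(δ'+1)/(δ'+1)⌉` steps at most `n'(1 - (δ'+1)/n')^T < n'/(δ'+1)` vertices remain
undominated, and adding them to the `T` chosen vertices gives a dominating set. For the size
bound the rounding in `T` is absorbed by concavity: writing `T = x + s` with
`x = n' ln(δ'+1)/(δ'+1)` and `0 ≤ s < 1`, the factor `(1 - (δ'+1)/n')^s ≤ 1 - s(δ'+1)/n'`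
takes `s` off the undominated count.
-/

open Finset Real

/-- The set of vertices not dominated (via closed neighbourhoods) by the set `S`. -/
def undominated {V : Type*} [Fintype V] [DecidableEq V]
    (G : SimpleGraph V) [DecidableRel G.Adj] (S : Finset V) : Finset V :=
  Finset.univ.filter (fun v => ∀ s ∈ S, ¬(v = s ∨ G.Adj s v))

lemma one_sub_rpow_le_one_sub_mul {a s : ℝ} (ha : a ≤ 1) (hs₀ : 0 ≤ s) (hs₁ : s ≤ 1) :
    (1 - a) ^ s ≤ 1 - s * a := by
  simpa [sub_eq_add_neg] using
    rpow_one_add_le_one_add_mul_self (s := -a) (by linarith) hs₀ hs₁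

lemma mul_one_sub_div_rpow_lt {n d t : ℝ} (hd : 0 < d) (hdn : d + 1 ≤ n)
    (hxt : n * log (d + 1) / (d + 1) ≤ t) (htx : t < n * log (d + 1) / (d + 1) + 1) :
    n * (1 - (d + 1) / n) ^ t < n / (d + 1) - (t - n * log (d + 1) / (d + 1)) := by
  set x := n * log (d + 1) / (d + 1)
  set a := (d + 1) / n with ha
  have hn : 0 < n := by linarith
  have ha₀ : 0 < a := by positivity
  have ha₁ : a ≤ 1 := (div_le_one hn).2 hdn
  have hx : 0 < x := by have := log_pos (by linarith : 1 < d + 1); positivity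
  have hax : a * x = log (d + 1) := by simp only [a, x]; field_simp
  have hbx : (1 - a) ^ x < (d + 1)⁻¹ :=
    calc (1 - a) ^ x < exp (-a) ^ x :=
          rpow_lt_rpow (by linarith) (by linarith [add_one_lt_exp (neg_ne_zero.2 ha₀.ne')]) hx
      _ = (d + 1)⁻¹ := by rw [← exp_mul, neg_mul, hax, exp_neg, exp_log (by linarith)]
  have hbs := one_sub_rpow_le_one_sub_mul ha₁ (sub_nonneg.2 hxt) (by linarith : t - x ≤ 1)
  have hsa : 0 < 1 - (t - x) * a := by nlinarith
  calc n * (1 - a) ^ t = n * ((1 - a) ^ x * (1 - a) ^ (t - x)) := by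
        rw [← rpow_add' (by linarith) (by linarith), add_sub_cancel]
    _ < n * ((d + 1)⁻¹ * (1 - (t - x) * a)) := by
        refine mul_lt_mul_of_pos_left ?_ hn
        calc (1 - a) ^ x * (1 - a) ^ (t - x) ≤ (1 - a) ^ x * (1 - (t - x) * a) :=
              mul_le_mul_of_nonneg_left hbs (rpow_nonneg (by linarith) x)
          _ < (d + 1)⁻¹ * (1 - (t - x) * a) := mul_lt_mul_of_pos_right hbx hsa
    _ = n / (d + 1) - (t - x) := by rw [ha]; field_simp

lemma card_le_of_eq_insert {α : Type*} [DecidableEq α] {f : ℕ → Finset α} (h₀ : f 0 = ∅)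
    (hf : ∀ t, ∃ v, f (t + 1) = insert v (f t)) (t : ℕ) : #(f t) ≤ t := by
  induction t with
  | zero => simp [h₀]
  | succ t ih =>
    obtain ⟨v, hv⟩ := hf t
    rw [hv]
    exact (card_insert_le v _).trans (by omega)

section Domination

variable {V : Type*} [Fintype V] [DecidableEq V] (G : SimpleGraph V) [DecidableRel G.Adj]

lemma undominated_insert (S : Finset V) (v : V) :
    undominated G (insert v S) = (undominated G S).filter (fun u => ¬(u = v ∨ G.Adj v u)) := by
  ext u
  simp only [undominated, mem_filter, mem_univ, true_and, forall_mem_insert]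
  tauto

lemma card_filter_add_card_undominated_insert (S : Finset V) (v : V) :
    #((undominated G S).filter (fun u => u = v ∨ G.Adj v u)) + #(undominated G (insert v S)) =
      #(undominated G S) := by
  rw [undominated_insert]
  exact card_filter_add_card_filter_not _

lemma union_undominated_dominates (S : Finset V) (v : V) :
    v ∈ S ∪ undominated G S ∨ ∃ u ∈ S ∪ undominated G S, G.Adj u v := by
  by_cases hv : v ∈ undominated G S
  · exact Or.inl (mem_union_right _ hv)
  · simp only [undominated, mem_filter, mem_univ, true_and, not_forall, not_not] at hv
    obtain ⟨s, hs, rfl | hsv⟩ := hv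
    · exact Or.inl (mem_union_left _ hs)
    · exact Or.inr ⟨s, mem_union_left _ hs, hsv⟩

lemma minDegree_add_one_mul_card_le_sum (U : Finset V) :
    (G.minDegree + 1) * #U ≤ ∑ w, #(U.filter (fun u => u = w ∨ G.Adj w u)) :=
  calc (G.minDegree + 1) * #U = ∑ _u ∈ U, (G.minDegree + 1) := by simp [mul_comm]
    _ ≤ ∑ u ∈ U, #(univ.filter (fun w => u = w ∨ G.Adj w u)) := sum_le_sum fun u _ => by
        have : univ.filter (fun w => u = w ∨ G.Adj w u) = insert u (G.neighborFinset u) := by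
          ext w
          simp [eq_comm, G.adj_comm]
        rw [this, card_insert_of_notMem (by simp), G.card_neighborFinset_eq_degree]
        exact Nat.add_le_add_right (G.minDegree_le_degree u) 1
    _ = ∑ w, #(U.filter (fun u => u = w ∨ G.Adj w u)) := by
        simp only [card_filter]
        exact sum_comm

lemma card_mul_card_undominated_insert_add_le (S : Finset V) {v : V}
    (hv : ∀ w, #((undominated G S).filter (fun u => u = w ∨ G.Adj w u)) ≤
      #((undominated G S).filter (fun u => u = v ∨ G.Adj v u))) :
    Fintype.card V * #(undominated G (insert v S)) + (G.minDegree + 1) * #(undominated G S) ≤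
      Fintype.card V * #(undominated G S) := by
  -- the greedy choice covers at least the average over all `w`
  have hcover : (G.minDegree + 1) * #(undominated G S) ≤
      Fintype.card V * #((undominated G S).filter (fun u => u = v ∨ G.Adj v u)) :=
    (minDegree_add_one_mul_card_le_sum G _).trans
      (by simpa using sum_le_card_nsmul univ _ _ fun w _ => hv w)
  calc _ ≤ Fintype.card V * #(undominated G (insert v S)) +
        Fintype.card V * #((undominated G S).filter (fun u => u = v ∨ G.Adj v u)) := by
        omega
    _ = Fintype.card V * #(undominated G S) := by
        rw [← card_filter_add_card_undominated_insert G S v]; ring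

lemma card_undominated_insert_le_mul [Nonempty V] (S : Finset V) {v : V}
    (hv : ∀ w, #((undominated G S).filter (fun u => u = w ∨ G.Adj w u)) ≤
      #((undominated G S).filter (fun u => u = v ∨ G.Adj v u))) :
    (#(undominated G (insert v S)) : ℝ) ≤
      (1 - (G.minDegree + 1) / Fintype.card V) * #(undominated G S) := by
  have hn : (0 : ℝ) < Fintype.card V := by exact_mod_cast Fintype.card_pos
  have h : (Fintype.card V * #(undominated G (insert v S)) +
      (G.minDegree + 1) * #(undominated G S) : ℝ) ≤ Fintype.card V * #(undominated G S) := by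
    exact_mod_cast card_mul_card_undominated_insert_add_le G S hv
  rw [← mul_le_mul_iff_of_pos_left hn]
  calc _ ≤ (Fintype.card V * #(undominated G S) - (G.minDegree + 1) * #(undominated G S) : ℝ) :=
        by linarith
    _ = _ := by field_simp

lemma card_undominated_le_geom [Nonempty V] (f : ℕ → Finset V)
    (hgreedy : ∀ t, ∃ v : V, f (t + 1) = insert v (f t) ∧
      ∀ w : V, ((undominated G (f t)).filter (fun u => u = w ∨ G.Adj w u)).card ≤
        ((undominated G (f t)).filter (fun u => u = v ∨ G.Adj v u)).card) (t : ℕ) :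
    (#(undominated G (f t)) : ℝ) ≤
      Fintype.card V * (1 - (G.minDegree + 1) / Fintype.card V) ^ t := by
  have hn : (0 : ℝ) < Fintype.card V := by exact_mod_cast Fintype.card_pos
  have hb : 0 ≤ 1 - ((G.minDegree : ℝ) + 1) / Fintype.card V := by
    rw [sub_nonneg, div_le_one hn]
    exact_mod_cast G.minDegree_lt_card
  have hgeom := le_geom (u := fun k => (#(undominated G (f k)) : ℝ)) hb t fun k _ => by
    obtain ⟨v, hv, hmax⟩ := hgreedy k
    rw [hv]
    exact card_undominated_insert_le_mul G _ hmax
  calc _ ≤ (1 - ((G.minDegree : ℝ) + 1) / Fintype.card V) ^ t * #(undominated G (f 0)) := hgeom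
    _ ≤ _ := by
        rw [mul_comm]
        gcongr
        exact_mod_cast card_le_univ _

end Domination

/-- Greedy dominating-set bound: running the greedy process (each step adds a vertex whose closed
neighbourhood covers the most currently undominated vertices) for
`⌈n' ln(δ'+1)/(δ'+1)⌉` steps leaves fewer than `n'/(1+δ')` undominated vertices; hence the
greedy heuristic returns a dominating set of size at most `n'(1 + ln(1+δ'))/(1+δ')`. -/
theorem greedy_dominating_set_bound (V : Type*) [Fintype V] [DecidableEq V]
    (G : SimpleGraph V) [DecidableRel G.Adj] (hδ : 1 ≤ G.minDegree)
    (f : ℕ → Finset V) (h0 : f 0 = ∅)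
    (hgreedy : ∀ t, ∃ v : V, f (t + 1) = insert v (f t) ∧
      ∀ w : V, ((undominated G (f t)).filter (fun u => u = w ∨ G.Adj w u)).card ≤
        ((undominated G (f t)).filter (fun u => u = v ∨ G.Adj v u)).card) :
    (((undominated G
          (f ⌈(Fintype.card V : ℝ) * Real.log ((G.minDegree : ℝ) + 1) /
              ((G.minDegree : ℝ) + 1)⌉₊)).card : ℝ) <
        (Fintype.card V : ℝ) / (1 + (G.minDegree : ℝ))) ∧
      (∀ v : V, v ∈ (f ⌈(Fintype.card V : ℝ) * Real.log ((G.minDegree : ℝ) + 1) /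
              ((G.minDegree : ℝ) + 1)⌉₊ ∪
            undominated G (f ⌈(Fintype.card V : ℝ) * Real.log ((G.minDegree : ℝ) + 1) /
              ((G.minDegree : ℝ) + 1)⌉₊)) ∨
        ∃ u ∈ (f ⌈(Fintype.card V : ℝ) * Real.log ((G.minDegree : ℝ) + 1) /
              ((G.minDegree : ℝ) + 1)⌉₊ ∪
            undominated G (f ⌈(Fintype.card V : ℝ) * Real.log ((G.minDegree : ℝ) + 1) /
              ((G.minDegree : ℝ) + 1)⌉₊)), G.Adj u v) ∧
      (((f ⌈(Fintype.card V : ℝ) * Real.log ((G.minDegree : ℝ) + 1) /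
              ((G.minDegree : ℝ) + 1)⌉₊ ∪
            undominated G (f ⌈(Fintype.card V : ℝ) * Real.log ((G.minDegree : ℝ) + 1) /
              ((G.minDegree : ℝ) + 1)⌉₊)).card : ℝ) ≤
        (Fintype.card V : ℝ) * (1 + Real.log (1 + (G.minDegree : ℝ))) /
          (1 + (G.minDegree : ℝ))) := by
  have : Nonempty V := by
    contrapose! hδ
    simp
  set x := (Fintype.card V : ℝ) * log ((G.minDegree : ℝ) + 1) / ((G.minDegree : ℝ) + 1)
  set T := ⌈x⌉₊
  have hδn : (G.minDegree : ℝ) + 1 ≤ Fintype.card V := by exact_mod_cast G.minDegree_lt_card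
  have hxT : x ≤ T := Nat.le_ceil x
  have hx₀ : 0 ≤ x := by
    have := log_nonneg (le_add_of_nonneg_left (Nat.cast_nonneg G.minDegree) : (1 : ℝ) ≤ _)
    positivity
  have hTx : (T : ℝ) < x + 1 := Nat.ceil_lt_add_one hx₀
  have hdecay := card_undominated_le_geom G f hgreedy T
  have hkey := mul_one_sub_div_rpow_lt (by exact_mod_cast hδ) hδn hxT hTx
  rw [rpow_natCast] at hkey
  have hfT : #(f T) ≤ T := card_le_of_eq_insert h0 (fun t => (hgreedy t).imp fun _ => And.left) T
  have hcard : (#(f T ∪ undominated G (f T)) : ℝ) ≤ T + #(undominated G (f T)) := by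
    exact_mod_cast (card_union_le _ _).trans (Nat.add_le_add_right hfT _)
  have hsize : (Fintype.card V : ℝ) * (1 + log (1 + (G.minDegree : ℝ))) / (1 + G.minDegree) =
      x + Fintype.card V / (G.minDegree + 1) := by
    rw [add_comm 1 (G.minDegree : ℝ)]; simp only [x]; field_simp; ring
  refine ⟨?_, union_undominated_dominates G _, ?_⟩
  · rw [add_comm 1 (G.minDegree : ℝ)]
    linarith
  · rw [hsize]
    linarith
end
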